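/- arXiv:math/0608643 — 2 statements merged into one kernel-verified Lean document; each statement's English description precedes it below -/
import Mathlib

section
/- Suppose θ : [1,∞) → R is increasing with 0 < θ(t) ≤ 2t for t ≥ 1, and set s_j := 2^{−j} θ(2^j). If ∫_1^∞ θ(t)²/t³ dt = ∞, then Σ_{j=1}^∞ (s_j − s_{j−1}/2)² = ∞. -/
/-- If `θ : [1,∞) → ℝ` is increasing with `0 < θ(t) ≤ 2t`, `s_j = 2^{−j} θ(2^j)`, and
`∫_1^∞ θ(t)²/t³ dt = ∞`, then `Σ_{j≥1} (s_j − s_{j−1}/2)² = ∞`. -/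
theorem sum_diverges_of_integral_diverges (θ : ℝ → ℝ)
    (hmono : MonotoneOn θ (Set.Ici 1))
    (hθ : ∀ t : ℝ, 1 ≤ t → 0 < θ t ∧ θ t ≤ 2 * t)
    (hdiv : ∫⁻ t in Set.Ioi (1:ℝ), ENNReal.ofReal (θ t ^ 2 / t ^ 3) = ⊤) :
    ¬ Summable fun j : ℕ =>
        (θ (2 ^ (j + 1)) / 2 ^ (j + 1) - θ (2 ^ j) / 2 ^ j / 2) ^ 2 := by
  intro hsum
  set s : ℕ → ℝ := fun j => θ (2 ^ j) / 2 ^ j with hs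
  have h2 : ∀ j : ℕ, (1:ℝ) ≤ 2 ^ j := fun j => one_le_pow₀ (by norm_num)
  have h2pos : ∀ j : ℕ, (0:ℝ) < 2 ^ j := fun j => by positivity
  have hspos : ∀ j, 0 < s j := fun j => div_pos (hθ _ (h2 j)).1 (h2pos j)
  have hsle : ∀ j, s j ≤ 2 := by
    intro j
    have := (hθ _ (h2 j)).2
    rw [hs]
    rw [div_le_iff₀ (h2pos j)]
    linarith
  -- pointwise key inequality : 4 d_j^2 ≥ 2 s_{j+1}^2 - s_j^2
  have key : ∀ j, 2 * s (j+1) ^ 2 - s j ^ 2 ≤ 4 * (s (j+1) - s j / 2) ^ 2 := by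
    intro j
    nlinarith [sq_nonneg (s (j+1) - s j)]
  -- the summable assumption, rewritten
  have hsum' : Summable fun j : ℕ => (s (j+1) - s j / 2) ^ 2 := hsum
  have hdnn : ∀ j : ℕ, (0:ℝ) ≤ (s (j+1) - s j / 2) ^ 2 := fun j => sq_nonneg _
  set D : ℝ := ∑' j, (s (j+1) - s j / 2) ^ 2 with hD
  -- partial sums bound by induction
  have hpart : ∀ n : ℕ, ∑ j ∈ Finset.range n, s (j+1) ^ 2 + s n ^ 2 ≤
      4 * ∑ j ∈ Finset.range n, (s (j+1) - s j / 2) ^ 2 + s 0 ^ 2 := by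
    intro n
    induction n with
    | zero => simp
    | succ n ih =>
      rw [Finset.sum_range_succ, Finset.sum_range_succ]
      have := key n
      linarith
  have hbound : ∀ n : ℕ, ∑ j ∈ Finset.range n, s (j+1) ^ 2 ≤ 4 * D + 4 := by
    intro n
    have h1 := hpart n
    have h2' : ∑ j ∈ Finset.range n, (s (j+1) - s j / 2) ^ 2 ≤ D := by
      exact Summable.sum_le_tsum _ (fun j _ => hdnn j) hsum'
    have h3 : s 0 ^ 2 ≤ 4 := by nlinarith [hsle 0, hspos 0]
    nlinarith [sq_nonneg (s n)]
  have hsum2 : Summable fun j : ℕ => s (j+1) ^ 2 :=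
    summable_of_sum_range_le (fun j => sq_nonneg _) hbound
  -- now bound the integral
  have hUnion : Set.Ioi (1:ℝ) = ⋃ j : ℕ, Set.Ioc ((2:ℝ)^j) (2^(j+1)) := by
    ext x
    simp only [Set.mem_Ioi, Set.mem_iUnion, Set.mem_Ioc]
    constructor
    · intro hx
      have hex : ∃ n : ℕ, x ≤ 2 ^ (n+1) := by
        obtain ⟨n, hn⟩ := pow_unbounded_of_one_lt x (by norm_num : (1:ℝ) < 2)
        exact ⟨n, le_of_lt (hn.trans_le (pow_le_pow_right₀ (by norm_num) (Nat.le_succ n)))⟩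
      refine ⟨Nat.find hex, ?_, Nat.find_spec hex⟩
      rcases Nat.eq_zero_or_pos (Nat.find hex) with h | h
      · rw [h]; simpa using hx
      · have hmin := Nat.find_min hex (m := Nat.find hex - 1) (by omega)
        push_neg at hmin
        have heq : Nat.find hex - 1 + 1 = Nat.find hex := by omega
        rwa [heq] at hmin
    · rintro ⟨j, hj, _⟩
      exact lt_of_le_of_lt (h2 j) hj
  have hdisj : Pairwise (Function.onFun Disjoint fun j : ℕ => Set.Ioc ((2:ℝ)^j) (2^(j+1))) := by
    intro i j hij
    rw [Function.onFun, Set.disjoint_left]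
    rintro x ⟨hi1, hi2⟩ ⟨hj1, hj2⟩
    rcases lt_or_gt_of_ne hij with h | h
    · have : (2:ℝ) ^ (i+1) ≤ 2 ^ j := pow_le_pow_right₀ (by norm_num) (by omega)
      linarith
    · have : (2:ℝ) ^ (j+1) ≤ 2 ^ i := pow_le_pow_right₀ (by norm_num) (by omega)
      linarith
  rw [hUnion, MeasureTheory.lintegral_iUnion (fun j => measurableSet_Ioc) hdisj] at hdiv
  -- each piece ≤ ofReal (4 * s(j+1)^2)
  have hpiece : ∀ j : ℕ, ∫⁻ t in Set.Ioc ((2:ℝ)^j) (2^(j+1)), ENNReal.ofReal (θ t ^ 2 / t ^ 3)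
      ≤ ENNReal.ofReal (4 * s (j+1) ^ 2) := by
    intro j
    have hle : ∀ t ∈ Set.Ioc ((2:ℝ)^j) (2^(j+1)),
        ENNReal.ofReal (θ t ^ 2 / t ^ 3) ≤ ENNReal.ofReal (4 * s (j+1) ^ 2 / 2 ^ j) := by
      rintro t ⟨ht1, ht2⟩
      apply ENNReal.ofReal_le_ofReal
      have ht1' : (1:ℝ) ≤ t := le_of_lt (lt_of_le_of_lt (h2 j) ht1)
      have hθt := hθ t ht1'
      have hθm : θ t ≤ θ (2 ^ (j+1)) := hmono ht1' (h2 (j+1)) ht2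
      have hθpos := hθt.1
      have htpos : (0:ℝ) < t := lt_of_lt_of_le one_pos ht1'
      have hnum : θ t ^ 2 ≤ θ (2 ^ (j+1)) ^ 2 := by nlinarith
      have hden : ((2:ℝ) ^ j) ^ 3 ≤ t ^ 3 := by
        apply pow_le_pow_left₀ (le_of_lt (h2pos j)) (le_of_lt ht1)
      calc θ t ^ 2 / t ^ 3 ≤ θ (2 ^ (j+1)) ^ 2 / ((2:ℝ) ^ j) ^ 3 := by
            apply div_le_div₀ (sq_nonneg _) hnum (by positivity) hden
        _ = 4 * s (j+1) ^ 2 / 2 ^ j := by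
            rw [hs]
            field_simp
            ring
    calc ∫⁻ t in Set.Ioc ((2:ℝ)^j) (2^(j+1)), ENNReal.ofReal (θ t ^ 2 / t ^ 3)
        ≤ ∫⁻ _ in Set.Ioc ((2:ℝ)^j) (2^(j+1)), ENNReal.ofReal (4 * s (j+1) ^ 2 / 2 ^ j) :=
          MeasureTheory.setLIntegral_mono measurable_const hle
      _ = ENNReal.ofReal (4 * s (j+1) ^ 2 / 2 ^ j) * MeasureTheory.volume (Set.Ioc ((2:ℝ)^j) (2^(j+1))) :=
          MeasureTheory.setLIntegral_const _ _
      _ ≤ ENNReal.ofReal (4 * s (j+1) ^ 2) := by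
          rw [Real.volume_Ioc, ← ENNReal.ofReal_mul (by positivity)]
          apply ENNReal.ofReal_le_ofReal
          have h2j := h2pos j
          have : (2:ℝ) ^ (j+1) - 2 ^ j = 2 ^ j := by ring
          rw [this]
          rw [div_mul_cancel₀]
          exact ne_of_gt h2j
  have hfin : (∑' j : ℕ, ∫⁻ t in Set.Ioc ((2:ℝ)^j) (2^(j+1)), ENNReal.ofReal (θ t ^ 2 / t ^ 3))
      ≤ ∑' j : ℕ, ENNReal.ofReal (4 * s (j+1) ^ 2) := ENNReal.tsum_le_tsum hpiece
  rw [hdiv] at hfin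
  have : (∑' j : ℕ, ENNReal.ofReal (4 * s (j+1) ^ 2)) ≠ ⊤ := by
    rw [← ENNReal.ofReal_tsum_of_nonneg (fun j => by positivity) (by exact hsum2.mul_left 4)]
    exact ENNReal.ofReal_ne_top
  exact this (top_le_iff.mp hfin)
end

section
/- Let E ⊂ R and suppose for some k ≥ 1 that |[2^k, 2^{k+1}] ∩ (R \ E)| ≥ 2^{k−1}. Then ∫_{2^k}^{2^{k+1}} θ_E(t)²/t³ dt > 10^{−3}, where θ_E(t) = |(R\E) ∩ [−t,t]|. -/
/-!
If at least half of `[c, 2c]` lies outside `E`, then `θ_E(t) ≥ t - 3c/2` for `t ∈ [3c/2, 2c]`,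
so the integral is at least `∫_{3c/2}^{2c} (t - 3c/2)²/t³ dt = log (4/3) - 9/32 > 10⁻³`.
-/

open MeasureTheory Set

/-- The paper's `θ_E(t) = |(ℝ \ E) ∩ [-t, t]|`. -/
noncomputable def theta (E : Set ℝ) (t : ℝ) : ℝ :=
  (volume (Eᶜ ∩ Icc (-t) t)).toReal

lemma theta_nonneg (E : Set ℝ) (t : ℝ) : 0 ≤ theta E t :=
  ENNReal.toReal_nonneg

lemma volume_compl_inter_Icc_ne_top (E : Set ℝ) (t : ℝ) : volume (Eᶜ ∩ Icc (-t) t) ≠ ⊤ :=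
  (measure_mono inter_subset_right |>.trans_lt measure_Icc_lt_top).ne

lemma monotone_theta (E : Set ℝ) : Monotone (theta E) := fun _ t hst =>
  ENNReal.toReal_mono (volume_compl_inter_Icc_ne_top E t) <|
    measure_mono <| inter_subset_inter_right _ <| Icc_subset_Icc (neg_le_neg hst) hst

lemma intervalIntegrable_theta_sq_div_cube (E : Set ℝ) {a b : ℝ} (ha : 0 < a) (hb : 0 < b) :
    IntervalIntegrable (fun t => theta E t ^ 2 / t ^ 3) volume a b := by
  have hmono : Monotone fun t => theta E t ^ 2 := fun s t hst =>
    pow_le_pow_left₀ (theta_nonneg E s) (monotone_theta E hst) 2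
  have hcont : ContinuousOn (fun t : ℝ => (t ^ 3)⁻¹) (uIcc a b) := by
    refine ContinuousOn.inv₀ (by fun_prop) fun t ht => ?_
    have : 0 < t := lt_of_lt_of_le (lt_min ha hb) ht.1
    positivity
  simpa only [div_eq_mul_inv] using hmono.intervalIntegrable.mul_continuousOn hcont

lemma sub_le_theta {E : Set ℝ} {a b m t : ℝ} (ha : 0 ≤ a) (hat : a ≤ t) (htb : t ≤ b)
    (hm : ENNReal.ofReal m ≤ volume (Icc a b ∩ Eᶜ)) : m - (b - t) ≤ theta E t := by
  have hcover : Icc a b ∩ Eᶜ ⊆ (Eᶜ ∩ Icc (-t) t) ∪ Ioc t b := by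
    rintro x ⟨⟨hax, hxb⟩, hxE⟩
    rcases le_or_gt x t with hxt | htx
    · exact Or.inl ⟨hxE, by linarith, hxt⟩
    · exact Or.inr ⟨htx, hxb⟩
  have hle : ENNReal.ofReal m ≤ ENNReal.ofReal (theta E t + (b - t)) := by
    rw [ENNReal.ofReal_add (theta_nonneg E t) (by linarith), theta,
      ENNReal.ofReal_toReal (volume_compl_inter_Icc_ne_top E t), ← Real.volume_Ioc]
    exact hm.trans <| (measure_mono hcover).trans (measure_union_le _ _)
  have := (ENNReal.ofReal_le_ofReal_iff (by linarith [theta_nonneg E t])).mp hle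
  linarith

lemma intervalIntegrable_sub_sq_div_cube (r : ℝ) {a b : ℝ} (ha : 0 < a) (hb : 0 < b) :
    IntervalIntegrable (fun t => (t - r) ^ 2 / t ^ 3) volume a b :=
  ContinuousOn.intervalIntegrable <| ContinuousOn.div (by fun_prop) (by fun_prop)
    fun t ht => (pow_pos (lt_of_lt_of_le (lt_min ha hb) ht.1) 3).ne'

lemma integral_sub_sq_div_cube {a b : ℝ} (ha : 0 < a) (hb : 0 < b) :
    ∫ t in a..b, (t - a) ^ 2 / t ^ 3 =
      Real.log (b / a) - 3 / 2 + 2 * (a / b) - (a / b) ^ 2 / 2 := by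
  have hpos : ∀ t ∈ uIcc a b, 0 < t := fun t ht => lt_of_lt_of_le (lt_min ha hb) ht.1
  have hderiv : ∀ t ∈ uIcc a b, HasDerivAt
      (fun t => Real.log t + 2 * a * t⁻¹ - a ^ 2 / 2 * (t ^ 2)⁻¹) ((t - a) ^ 2 / t ^ 3) t := by
    intro t ht
    have ht0 : t ≠ 0 := (hpos t ht).ne'
    refine (((Real.hasDerivAt_log ht0).add ((hasDerivAt_inv ht0).const_mul (2 * a))).sub
      (((hasDerivAt_pow 2 t).inv (pow_ne_zero 2 ht0)).const_mul (a ^ 2 / 2))).congr_deriv ?_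
    field_simp
    ring
  rw [intervalIntegral.integral_eq_sub_of_hasDerivAt hderiv
      (intervalIntegrable_sub_sq_div_cube a ha hb),
    Real.log_div hb.ne' ha.ne']
  field_simp
  ring

/-- By `sub_le_theta`, `θ_E(t) ≥ t - r` on `[r, b]`. -/
lemma integral_sub_sq_div_cube_le_integral_theta {E : Set ℝ} {a r b : ℝ} (ha : 0 < a)
    (har : a ≤ r) (hrb : r ≤ b) (hm : ENNReal.ofReal (b - r) ≤ volume (Icc a b ∩ Eᶜ)) :
    ∫ t in r..b, (t - r) ^ 2 / t ^ 3 ≤ ∫ t in a..b, theta E t ^ 2 / t ^ 3 := by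
  have hr : 0 < r := ha.trans_le har
  have hb : 0 < b := hr.trans_le hrb
  have hpointwise : ∀ t ∈ Icc r b, (t - r) ^ 2 / t ^ 3 ≤ theta E t ^ 2 / t ^ 3 := by
    intro t ⟨hrt, htb⟩
    have hθ := sub_le_theta ha.le (har.trans hrt) htb hm
    have : 0 < t := hr.trans_le hrt
    gcongr
    linarith
  calc ∫ t in r..b, (t - r) ^ 2 / t ^ 3
      ≤ ∫ t in r..b, theta E t ^ 2 / t ^ 3 :=
        intervalIntegral.integral_mono_on hrb (intervalIntegrable_sub_sq_div_cube r hr hb)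
          (intervalIntegrable_theta_sq_div_cube E hr hb) hpointwise
    _ ≤ ∫ t in a..b, theta E t ^ 2 / t ^ 3 := by
        refine intervalIntegral.integral_mono_interval har hrb le_rfl ?_
          (intervalIntegrable_theta_sq_div_cube E ha hb)
        filter_upwards [ae_restrict_mem measurableSet_Ioc] with t ht
        have : 0 < t := ha.trans ht.1
        exact div_nonneg (sq_nonneg _) (by positivity)

/-- From `2 ^ 41 ≤ (4 / 3) ^ 100` and `log 2 > 0.6931471803`. -/
lemma lt_log_four_div_three : (0.2841 : ℝ) < Real.log (4 / 3) := by
  have hpow : (2 : ℝ) ^ 41 ≤ (4 / 3) ^ 100 := by norm_num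
  have hlog := Real.log_le_log (by positivity) hpow
  rw [Real.log_pow, Real.log_pow] at hlog
  push_cast at hlog
  linarith [Real.log_two_gt_d9]

theorem integral_theta_sq_gt_general (E : Set ℝ) (k : ℕ)
    (h : ENNReal.ofReal ((2:ℝ) ^ k / 2) ≤
      volume (Set.Icc ((2:ℝ) ^ k) ((2:ℝ) ^ (k + 1)) ∩ Eᶜ)) :
    (1 : ℝ) / 1000 <
      ∫ t in ((2:ℝ) ^ k)..((2:ℝ) ^ (k + 1)),
        ((volume (Eᶜ ∩ Set.Icc (-t) t)).toReal) ^ 2 / t ^ 3 := by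
  set c : ℝ := 2 ^ k
  have hc : 0 < c := by positivity
  rw [pow_succ] at h ⊢
  have hm : ENNReal.ofReal (c * 2 - 3 * c / 2) ≤ volume (Icc c (c * 2) ∩ Eᶜ) := by
    convert h using 2
    ring
  calc (1 : ℝ) / 1000 < Real.log (4 / 3) - 9 / 32 := by linarith [lt_log_four_div_three]
    _ = ∫ t in (3 * c / 2)..(c * 2), (t - 3 * c / 2) ^ 2 / t ^ 3 := by
        rw [integral_sub_sq_div_cube (by positivity) (by positivity)]
        have hratio : 3 * c / 2 / (c * 2) = 3 / 4 := by field_simp; ring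
        have hratio' : c * 2 / (3 * c / 2) = 4 / 3 := by field_simp; ring
        rw [hratio, hratio']
        norm_num
    _ ≤ ∫ t in c..(c * 2), theta E t ^ 2 / t ^ 3 :=
        integral_sub_sq_div_cube_le_integral_theta hc (by linarith) (by linarith) hm

/-- If at least half of `[2^k, 2^{k+1}]` (measure `≥ 2^{k−1}`) lies outside `E`, then
`∫_{2^k}^{2^{k+1}} θ_E(t)²/t³ dt > 10^{−3}`, where `θ_E(t) = |(ℝ\E) ∩ [−t,t]|`. -/
theorem integral_theta_sq_gt (E : Set ℝ) (k : ℕ) (hk : 1 ≤ k)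
    (h : ENNReal.ofReal ((2:ℝ) ^ k / 2) ≤
      volume (Set.Icc ((2:ℝ) ^ k) ((2:ℝ) ^ (k + 1)) ∩ Eᶜ)) :
    (1 : ℝ) / 1000 <
      ∫ t in ((2:ℝ) ^ k)..((2:ℝ) ^ (k + 1)),
        ((volume (Eᶜ ∩ Set.Icc (-t) t)).toReal) ^ 2 / t ^ 3 :=
  integral_theta_sq_gt_general E k h
end
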